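/- Let v_F(x, y, t) be the conditional Föllmer velocity field with |X|_∞ ≤ 1 a.s. Then ∇_x v_F(x, y, t) = (−t/(1−t²))·I_{d_x} + (t/(1−t²)²)·Cov(X | W_t = x, Y = y), where W_t = tX + √(1−t²)W and Cov denotes the conditional covariance matrix. -/

import Mathlib

/-!
Write `s = 1 - t²` and `Z(x) = ∫ p(a|y) exp(-‖x - t a‖² / (2s)) da`. Differentiating under the
integral sign (legitimate because `X` is bounded) gives Tweedie's formula
`∇ log Z(x) = (t m(x) - x) / s`, where `m(x) = E[X | W_t = x, Y = y]` is the posterior mean, so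
`v_F(x) = m(x) / s - (t / s) x`. Differentiating the Gaussian weight once more multiplies it by
`⟪t a - x, ξ⟫ / s`; after normalisation the `x`-part cancels and
`Dm(x) = (t / s) Cov(X | W_t = x, Y = y)`.
-/

open MeasureTheory Set
open scoped ENNReal RealInnerProductSpace

noncomputable section

theorem inner_integral_smul {α E : Type*} [MeasurableSpace α] {μ : Measure α}
    [NormedAddCommGroup E] [InnerProductSpace ℝ E] [CompleteSpace E] {c : α → ℝ} {f : α → E}
    (hf : Integrable (fun a => c a • f a) μ) (η : E) :
    ⟪∫ a, c a • f a ∂μ, η⟫ = ∫ a, c a * ⟪η, f a⟫ ∂μ := by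
  rw [real_inner_comm, ← integral_inner hf]
  simp only [real_inner_smul_right]

theorem EuclideanSpace.norm_le_sqrt_card {ι : Type*} [Fintype ι] {u : EuclideanSpace ℝ ι}
    (hu : ∀ i, |u i| ≤ 1) : ‖u‖ ≤ √(Fintype.card ι) := by
  rw [EuclideanSpace.norm_eq]
  gcongr
  calc ∑ i, ‖u i‖ ^ 2 ≤ ∑ _i : ι, (1 : ℝ) :=
        Finset.sum_le_sum fun i _ => pow_le_one₀ (norm_nonneg _) (hu i)
    _ = Fintype.card ι := by simp

section GaussianKernel

variable {E F : Type*} [NormedAddCommGroup E] [InnerProductSpace ℝ E] [NormedAddCommGroup F]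
  [NormedSpace ℝ F]

def gaussKernel (t s : ℝ) (x a : E) : ℝ := Real.exp (-‖x - t • a‖ ^ 2 / (2 * s))

theorem gaussKernel_pos (t s : ℝ) (x a : E) : 0 < gaussKernel t s x a := Real.exp_pos _

theorem gaussKernel_le_one {s : ℝ} (hs : 0 ≤ s) (t : ℝ) (x a : E) : gaussKernel t s x a ≤ 1 :=
  Real.exp_le_one_iff.2 (div_nonpos_of_nonpos_of_nonneg (by simp) (by linarith))

theorem continuous_gaussKernel (t s : ℝ) (x : E) : Continuous (gaussKernel t s x) := by
  unfold gaussKernel; fun_prop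

theorem hasFDerivAt_gaussKernel (t s : ℝ) (x a : E) :
    HasFDerivAt (gaussKernel t s · a) ((gaussKernel t s x a / s) • innerSL ℝ (t • a - x)) x := by
  have h := (((hasFDerivAt_id x).sub_const (t • a)).norm_sq.const_mul (-(2 * s)⁻¹)).exp
  have hk : (gaussKernel t s · a) = fun x => Real.exp (-(2 * s)⁻¹ * ‖id x - t • a‖ ^ 2) := by
    ext x; simp only [gaussKernel, id]; ring_nf
  rw [hk]
  refine h.congr_fderiv (ContinuousLinearMap.ext fun ξ => ?_)
  simp only [gaussKernel, smul_apply, innerSL_apply_apply, smul_eq_mul,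
    ContinuousLinearMap.comp_apply, ContinuousLinearMap.id_apply, id_eq]
  rw [← neg_sub x, inner_neg_left]
  ring_nf

theorem norm_gaussKernel_smul_le {s : ℝ} (hs : 0 ≤ s) (t : ℝ) (x a : E) {c : ℝ} {v : F} {C : ℝ}
    (hv : c ≠ 0 → ‖v‖ ≤ C) : ‖(c * gaussKernel t s x a) • v‖ ≤ ‖c‖ * C := by
  rcases eq_or_ne c 0 with h | h
  · simp [h]
  rw [norm_smul, norm_mul, Real.norm_of_nonneg (gaussKernel_pos t s x a).le]
  calc ‖c‖ * gaussKernel t s x a * ‖v‖ ≤ ‖c‖ * 1 * C := by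
        gcongr
        exacts [gaussKernel_le_one hs t x a, hv h]
    _ = ‖c‖ * C := by rw [mul_one]

theorem norm_smul_smulRight_innerSL_le {s : ℝ} (hs : 0 ≤ s) (t : ℝ) {R C : ℝ} {x₀ x a : E}
    (hx : dist x x₀ ≤ 1) (ha : ‖a‖ ≤ R) {v : F} (hv : ‖v‖ ≤ C) :
    ‖s⁻¹ • (innerSL ℝ (t • a - x)).smulRight v‖ ≤ s⁻¹ * ((|t| * R + (‖x₀‖ + 1)) * C) := by
  have hta : ‖t • a - x‖ ≤ |t| * R + (‖x₀‖ + 1) :=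
    calc ‖t • a - x‖ ≤ |t| * ‖a‖ + ‖x‖ := by
          rw [← Real.norm_eq_abs, ← norm_smul]; exact norm_sub_le _ _
      _ ≤ |t| * R + (‖x₀‖ + 1) := by
          gcongr
          exact norm_le_norm_add_const_of_dist_le hx
  rw [norm_smul, ContinuousLinearMap.norm_smulRight_apply, innerSL_apply_norm,
    Real.norm_of_nonneg (inv_nonneg.2 hs)]
  exact mul_le_mul_of_nonneg_left (mul_le_mul hta hv (norm_nonneg _)
    ((norm_nonneg _).trans hta)) (inv_nonneg.2 hs)

end GaussianKernel

section GaussianSmoothing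

variable {E F : Type*} [NormedAddCommGroup E] [InnerProductSpace ℝ E] [MeasurableSpace E]
  [BorelSpace E] [NormedAddCommGroup F] [NormedSpace ℝ F] {μ : Measure E} {q : E → ℝ}
  {t s C : ℝ}

theorem integrable_gaussKernel_smul (hs : 0 ≤ s) (hq : Integrable q μ) {f : E → F}
    (hf : AEStronglyMeasurable f μ) (hfC : ∀ a, q a ≠ 0 → ‖f a‖ ≤ C) (x : E) :
    Integrable (fun a => (q a * gaussKernel t s x a) • f a) μ :=
  (hq.norm.mul_const C).mono'
    ((hq.aestronglyMeasurable.mul (continuous_gaussKernel t s x).aestronglyMeasurable).smul hf)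
    (ae_of_all _ fun a => norm_gaussKernel_smul_le hs t x a (hfC a))

theorem integral_gaussKernel_pos (hs : 0 ≤ s) (hq0 : 0 ≤ q) (hq : Integrable q μ)
    (hq_pos : 0 < ∫ a, q a ∂μ) (x : E) : 0 < ∫ a, q a * gaussKernel t s x a ∂μ := by
  have hint : Integrable (fun a => q a * gaussKernel t s x a) μ := by
    simpa using integrable_gaussKernel_smul (f := fun _ => (1 : ℝ)) (C := 1) hs hq
      aestronglyMeasurable_const (fun _ _ => by simp) x
  have hsupp : Function.support (fun a => q a * gaussKernel t s x a) = Function.support q := by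
    simp [Function.support_mul, (gaussKernel_pos t s x _).ne']
  rw [integral_pos_iff_support_of_nonneg hq0 hq] at hq_pos
  rwa [integral_pos_iff_support_of_nonneg (fun a => mul_nonneg (hq0 a)
    (gaussKernel_pos t s x a).le) hint, hsupp]

end GaussianSmoothing

section GaussianSmoothingDeriv

variable {E F : Type*} [NormedAddCommGroup E] [InnerProductSpace ℝ E] [MeasurableSpace E]
  [BorelSpace E] [SecondCountableTopology E] [NormedAddCommGroup F] [NormedSpace ℝ F]
  {μ : Measure E} {q : E → ℝ} {t s R C : ℝ} {g : E → F}

theorem integrable_gaussKernel_smul_smulRight (hs : 0 ≤ s) (hq : Integrable q μ)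
    (hqR : ∀ a, q a ≠ 0 → ‖a‖ ≤ R) (hg : Continuous g) (hgC : ∀ a, q a ≠ 0 → ‖g a‖ ≤ C)
    (x : E) :
    Integrable (fun a => (q a * gaussKernel t s x a) •
      s⁻¹ • (innerSL ℝ (t • a - x)).smulRight (g a)) μ := by
  have hinner : Continuous fun a : E => innerSL ℝ (t • a - x) := by fun_prop
  have hcont : Continuous fun a => s⁻¹ • (innerSL ℝ (t • a - x)).smulRight (g a) :=
    (((ContinuousLinearMap.smulRightL ℝ E F).continuous.comp hinner).clm_apply hg).const_smul s⁻¹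
  exact integrable_gaussKernel_smul hs hq hcont.aestronglyMeasurable (fun a ha =>
    norm_smul_smulRight_innerSL_le hs t ((dist_self x).trans_le zero_le_one) (hqR a ha)
      (hgC a ha)) x

theorem hasFDerivAt_integral_gaussKernel_smul (hs : 0 < s) (hq : Integrable q μ)
    (hqR : ∀ a, q a ≠ 0 → ‖a‖ ≤ R) (hg : Continuous g) (hgC : ∀ a, q a ≠ 0 → ‖g a‖ ≤ C)
    (x₀ : E) :
    HasFDerivAt (fun x => ∫ a, (q a * gaussKernel t s x a) • g a ∂μ)
      (∫ a, (q a * gaussKernel t s x₀ a) • s⁻¹ • (innerSL ℝ (t • a - x₀)).smulRight (g a) ∂μ)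
      x₀ := by
  have hF := integrable_gaussKernel_smul hs.le hq hg.aestronglyMeasurable hgC (t := t)
  refine hasFDerivAt_integral_of_dominated_of_fderiv_le
    (bound := fun a => ‖q a‖ * (s⁻¹ * ((|t| * R + (‖x₀‖ + 1)) * C)))
    (Metric.ball_mem_nhds x₀ one_pos) (Filter.Eventually.of_forall fun x => (hF x).1) (hF x₀)
    (integrable_gaussKernel_smul_smulRight hs.le hq hqR hg hgC x₀).1
    (ae_of_all _ fun a x hx => norm_gaussKernel_smul_le hs.le t x a fun ha =>
      norm_smul_smulRight_innerSL_le hs.le t (Metric.mem_ball.1 hx).le (hqR a ha) (hgC a ha))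
    (hq.norm.mul_const _) (ae_of_all _ fun a x _ => ?_)
  refine (((hasFDerivAt_gaussKernel t s x a).const_mul (q a)).smul_const (g a)).congr_fderiv ?_
  ext ξ
  simp only [ContinuousLinearMap.smulRight_apply, smul_apply, innerSL_apply_apply, smul_eq_mul,
    smul_smul]
  ring_nf

theorem differentiable_integral_gaussKernel_smul (hs : 0 < s) (hq : Integrable q μ)
    (hqR : ∀ a, q a ≠ 0 → ‖a‖ ≤ R) (hg : Continuous g) (hgC : ∀ a, q a ≠ 0 → ‖g a‖ ≤ C) :
    Differentiable ℝ (fun x => ∫ a, (q a * gaussKernel t s x a) • g a ∂μ) := fun x =>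
  (hasFDerivAt_integral_gaussKernel_smul hs hq hqR hg hgC x).differentiableAt

theorem integrable_gaussKernel_inner_smul (hs : 0 ≤ s) (hq : Integrable q μ)
    (hqR : ∀ a, q a ≠ 0 → ‖a‖ ≤ R) (hg : Continuous g) (hgC : ∀ a, q a ≠ 0 → ‖g a‖ ≤ C)
    (x ξ : E) : Integrable (fun a => (q a * gaussKernel t s x a * ⟪ξ, a⟫) • g a) μ := by
  have hbound : ∀ a, q a ≠ 0 → ‖⟪ξ, a⟫ • g a‖ ≤ ‖ξ‖ * R * C := fun a ha => by
    have hξa : |⟪ξ, a⟫| ≤ ‖ξ‖ * R :=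
      (abs_real_inner_le_norm ξ a).trans (mul_le_mul_of_nonneg_left (hqR a ha) (norm_nonneg ξ))
    rw [norm_smul, Real.norm_eq_abs]
    exact mul_le_mul hξa (hgC a ha) (norm_nonneg _) ((abs_nonneg _).trans hξa)
  simpa only [mul_smul] using integrable_gaussKernel_smul (f := fun a => ⟪ξ, a⟫ • g a) hs hq
    ((continuous_const.inner continuous_id).smul hg).aestronglyMeasurable hbound x

theorem fderiv_integral_gaussKernel_smul_apply (hs : 0 < s) (hq : Integrable q μ)
    (hqR : ∀ a, q a ≠ 0 → ‖a‖ ≤ R) (hg : Continuous g) (hgC : ∀ a, q a ≠ 0 → ‖g a‖ ≤ C)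
    (x ξ : E) :
    fderiv ℝ (fun x => ∫ a, (q a * gaussKernel t s x a) • g a ∂μ) x ξ =
      s⁻¹ • (t • ∫ a, (q a * gaussKernel t s x a * ⟪ξ, a⟫) • g a ∂μ
        - ⟪x, ξ⟫ • ∫ a, (q a * gaussKernel t s x a) • g a ∂μ) := by
  have hpoint : ∀ a, ((q a * gaussKernel t s x a) •
      s⁻¹ • (innerSL ℝ (t • a - x)).smulRight (g a)) ξ =
      s⁻¹ • (t • (q a * gaussKernel t s x a * ⟪ξ, a⟫) • g a
        - ⟪x, ξ⟫ • (q a * gaussKernel t s x a) • g a) := fun a => by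
    simp only [smul_apply, ContinuousLinearMap.smulRight_apply, innerSL_apply_apply,
      inner_sub_left, real_inner_smul_left, real_inner_comm a ξ, smul_smul]
    module
  rw [(hasFDerivAt_integral_gaussKernel_smul hs hq hqR hg hgC x).fderiv,
    ContinuousLinearMap.integral_apply
      (integrable_gaussKernel_smul_smulRight hs.le hq hqR hg hgC x)]
  simp only [hpoint]
  rw [integral_smul, integral_sub, integral_smul, integral_smul]
  · exact (integrable_gaussKernel_inner_smul hs.le hq hqR hg hgC x ξ).smul t
  · exact (integrable_gaussKernel_smul hs.le hq hg.aestronglyMeasurable hgC x).smul _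

theorem differentiable_integral_gaussKernel (hs : 0 < s) (hq : Integrable q μ)
    (hqR : ∀ a, q a ≠ 0 → ‖a‖ ≤ R) :
    Differentiable ℝ (fun x => ∫ a, q a * gaussKernel t s x a ∂μ) := by
  simpa using differentiable_integral_gaussKernel_smul (g := fun _ => (1 : ℝ)) (C := 1) hs hq hqR
    continuous_const (fun _ _ => by simp)

theorem fderiv_integral_gaussKernel_apply (hs : 0 < s) (hq : Integrable q μ)
    (hqR : ∀ a, q a ≠ 0 → ‖a‖ ≤ R) (x ξ : E) :
    fderiv ℝ (fun x => ∫ a, q a * gaussKernel t s x a ∂μ) x ξ =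
      s⁻¹ * (t * ∫ a, q a * gaussKernel t s x a * ⟪ξ, a⟫ ∂μ
        - ⟪x, ξ⟫ * ∫ a, q a * gaussKernel t s x a ∂μ) := by
  simpa using fderiv_integral_gaussKernel_smul_apply (g := fun _ => (1 : ℝ)) (C := 1) hs hq hqR
    continuous_const (fun _ _ => by simp) x ξ

end GaussianSmoothingDeriv

/-- `E[X | tX + √s W = x]` for `X` with density `q` with respect to `μ` and `W` standard
Gaussian independent of `X`. -/
def posteriorMean {E : Type*} [NormedAddCommGroup E] [InnerProductSpace ℝ E] [MeasurableSpace E]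
    (μ : Measure E) (q : E → ℝ) (t s : ℝ) (x : E) : E :=
  (∫ a, q a * gaussKernel t s x a ∂μ)⁻¹ • ∫ a, (q a * gaussKernel t s x a) • a ∂μ

section PosteriorMean

variable {E : Type*} [NormedAddCommGroup E] [InnerProductSpace ℝ E] [MeasurableSpace E]
  [BorelSpace E] [SecondCountableTopology E] {μ : Measure E} {q : E → ℝ} {t s R : ℝ}

theorem hasGradientAt_log_const_mul_integral_gaussKernel [CompleteSpace E] {c : ℝ} (hc : c ≠ 0)
    (hs : 0 < s) (hq0 : 0 ≤ q) (hq : Integrable q μ) (hq_pos : 0 < ∫ a, q a ∂μ)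
    (hqR : ∀ a, q a ≠ 0 → ‖a‖ ≤ R) (x : E) :
    HasGradientAt (fun x => Real.log (c * ∫ a, q a * gaussKernel t s x a ∂μ))
      ((t / s) • posteriorMean μ q t s x - s⁻¹ • x) x := by
  have hZ := integral_gaussKernel_pos (t := t) hs.le hq0 hq hq_pos x
  rw [hasGradientAt_iff_hasFDerivAt]
  refine (((differentiable_integral_gaussKernel hs hq hqR x).hasFDerivAt.const_mul c).log
    (mul_ne_zero hc hZ.ne')).congr_fderiv (ContinuousLinearMap.ext fun ξ => ?_)
  simp only [posteriorMean, InnerProductSpace.toDual_apply_apply, smul_apply, smul_eq_mul,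
    inner_sub_left, real_inner_smul_left, fderiv_integral_gaussKernel_apply hs hq hqR]
  rw [inner_integral_smul (integrable_gaussKernel_smul (f := fun a => a) hs.le hq
    aestronglyMeasurable_id hqR x)]
  field_simp

theorem hasFDerivAt_posteriorMean (hs : 0 < s) (hq0 : 0 ≤ q) (hq : Integrable q μ)
    (hq_pos : 0 < ∫ a, q a ∂μ) (hqR : ∀ a, q a ≠ 0 → ‖a‖ ≤ R) (x : E) :
    HasFDerivAt (posteriorMean μ q t s)
      ((∫ a, q a * gaussKernel t s x a ∂μ)⁻¹ •
          fderiv ℝ (fun x => ∫ a, (q a * gaussKernel t s x a) • a ∂μ) x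
        + (-((∫ a, q a * gaussKernel t s x a ∂μ) ^ 2)⁻¹ •
          fderiv ℝ (fun x => ∫ a, q a * gaussKernel t s x a ∂μ) x).smulRight
            (∫ a, (q a * gaussKernel t s x a) • a ∂μ)) x :=
  ((hasDerivAt_inv (integral_gaussKernel_pos hs.le hq0 hq hq_pos x).ne').comp_hasFDerivAt x
    (differentiable_integral_gaussKernel hs hq hqR x).hasFDerivAt).smul
    (differentiable_integral_gaussKernel_smul (g := fun a => a) hs hq hqR continuous_id hqR
      x).hasFDerivAt

theorem inner_fderiv_posteriorMean_apply [CompleteSpace E] (hs : 0 < s) (hq0 : 0 ≤ q)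
    (hq : Integrable q μ) (hq_pos : 0 < ∫ a, q a ∂μ) (hqR : ∀ a, q a ≠ 0 → ‖a‖ ≤ R) (x ξ η : E) :
    ⟪fderiv ℝ (posteriorMean μ q t s) x ξ, η⟫ = (t / s) *
      ((∫ a, (q a * gaussKernel t s x a / ∫ b, q b * gaussKernel t s x b ∂μ) *
          (⟪ξ, a⟫ * ⟪η, a⟫) ∂μ)
        - (∫ a, (q a * gaussKernel t s x a / ∫ b, q b * gaussKernel t s x b ∂μ) * ⟪ξ, a⟫ ∂μ)
          * ∫ a, (q a * gaussKernel t s x a / ∫ b, q b * gaussKernel t s x b ∂μ) * ⟪η, a⟫ ∂μ) := by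
  have hZ := (integral_gaussKernel_pos (t := t) hs.le hq0 hq hq_pos x).ne'
  have hs' := hs.ne'
  rw [(hasFDerivAt_posteriorMean hs hq0 hq hq_pos hqR x).fderiv]
  simp only [add_apply, smul_apply, smul_eq_mul, ContinuousLinearMap.smulRight_apply,
    fderiv_integral_gaussKernel_apply hs hq hqR,
    fderiv_integral_gaussKernel_smul_apply (g := fun a => a) hs hq hqR continuous_id hqR,
    inner_add_left, inner_sub_left, real_inner_smul_left,
    inner_integral_smul (integrable_gaussKernel_smul (f := fun a => a) hs.le hq
      aestronglyMeasurable_id hqR x),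
    inner_integral_smul (integrable_gaussKernel_inner_smul (g := fun a => a) hs.le hq hqR
      continuous_id hqR x ξ)]
  simp only [div_mul_eq_mul_div, integral_div, mul_assoc]
  field_simp
  ring

end PosteriorMean

theorem stmt6_general {d dy : ℕ} (t : ℝ) (ht : t ∈ Set.Ioo (0 : ℝ) 1)
    (p : EuclideanSpace ℝ (Fin d) → EuclideanSpace ℝ (Fin dy) → ℝ)
    (hp0 : ∀ u y, 0 ≤ p u y)
    (hpsupp : ∀ u y, p u y ≠ 0 → ∀ i, |u i| ≤ 1)
    (hpint : ∀ y, ∫ u, p u y = 1)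
    (w : EuclideanSpace ℝ (Fin d) → EuclideanSpace ℝ (Fin dy) →
      EuclideanSpace ℝ (Fin d) → ℝ)
    (hw : w = fun x y u => p u y * Real.exp (-‖x - t • u‖ ^ 2 / (2 * (1 - t ^ 2))))
    (Z : EuclideanSpace ℝ (Fin d) → EuclideanSpace ℝ (Fin dy) → ℝ)
    (hZ : Z = fun x y => ∫ u, w x y u)
    (vF : EuclideanSpace ℝ (Fin d) → EuclideanSpace ℝ (Fin dy) →
      EuclideanSpace ℝ (Fin d))
    (hvF : vF = fun x y =>
      (1 / t) • gradient
          (fun x' => Real.log ((2 * Real.pi * (1 - t ^ 2)) ^ (-(d : ℝ) / 2) * Z x' y)) x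
        + (1 / t) • x) :
    ∀ (x : EuclideanSpace ℝ (Fin d)) (y : EuclideanSpace ℝ (Fin dy))
      (u v : EuclideanSpace ℝ (Fin d)),
      ⟪(fderiv ℝ (fun x' => vF x' y) x) u, v⟫
        = (-(t / (1 - t ^ 2))) * ⟪u, v⟫
          + (t / (1 - t ^ 2) ^ 2) *
            ((∫ a, (w x y a / Z x y) * (⟪u, a⟫ * ⟪v, a⟫))
              - (∫ a, (w x y a / Z x y) * ⟪u, a⟫) * ∫ a, (w x y a / Z x y) * ⟪v, a⟫) := by
  intro x y u v
  subst hw hZ hvF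
  obtain ⟨ht0, ht1⟩ := ht
  have hs : 0 < 1 - t ^ 2 := by nlinarith
  have hq : Integrable (p · y) := .of_integral_ne_zero (by simp [hpint y])
  have hq_pos : 0 < ∫ a, p a y := by simp [hpint y]
  have hqR : ∀ a, p a y ≠ 0 → ‖a‖ ≤ √d := fun a ha => by
    simpa using EuclideanSpace.norm_le_sqrt_card (hpsupp a y ha)
  have hc : (2 * Real.pi * (1 - t ^ 2)) ^ (-(d : ℝ) / 2) ≠ 0 := by positivity
  simp only [← gaussKernel.eq_1, (hasGradientAt_log_const_mul_integral_gaussKernel hc hs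
    (hp0 · y) hq hq_pos hqR _).gradient]
  have hmean := (hasFDerivAt_posteriorMean (t := t) hs (hp0 · y) hq hq_pos hqR x).differentiableAt
  rw [fderiv_fun_add (by fun_prop) (by fun_prop), fderiv_fun_const_smul (by fun_prop),
    fderiv_fun_sub (by fun_prop) (by fun_prop), fderiv_fun_const_smul hmean,
    fderiv_fun_const_smul (by fun_prop), fderiv_fun_const_smul (by fun_prop), fderiv_fun_id]
  simp only [add_apply, sub_apply, smul_apply, ContinuousLinearMap.id_apply, inner_add_left,
    inner_sub_left, real_inner_smul_left,
    inner_fderiv_posteriorMean_apply hs (hp0 · y) hq hq_pos hqR]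
  field_simp
  ring

/-- let `p(·|y)` be the conditional density of `X` given `Y = y`,
supported in the unit cube (`|X|_∞ ≤ 1` a.s.), let
`w(x,y,u) = p(u|y) exp(−‖x−tu‖²/(2(1−t²)))`, `Z(x,y) = ∫ w(x,y,u) du`
(so that `f_t(x|y) = (2π(1−t²))^{−d/2} Z(x,y)` is the conditional density of
`W_t = tX + √(1−t²)W` given `Y = y`), and let
`v_F(x,y) = (1/t)∇_x log f_t(x|y) + x/t` be the conditional Föllmer velocity.
Then `∇_x v_F = (−t/(1−t²)) I_d + (t/(1−t²)²) Cov(X | W_t = x, Y = y)`, where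
the conditional covariance is expressed through the weight `w/Z`. -/
theorem stmt6 {d dy : ℕ} (t : ℝ) (ht : t ∈ Set.Ioo (0 : ℝ) 1)
    (p : EuclideanSpace ℝ (Fin d) → EuclideanSpace ℝ (Fin dy) → ℝ)
    (hp0 : ∀ u y, 0 ≤ p u y)
    (hpsupp : ∀ u y, p u y ≠ 0 → ∀ i, |u i| ≤ 1)
    (hpmeas : ∀ y, Measurable fun u => p u y)
    (hpint : ∀ y, ∫ u, p u y = 1)
    (w : EuclideanSpace ℝ (Fin d) → EuclideanSpace ℝ (Fin dy) →
      EuclideanSpace ℝ (Fin d) → ℝ)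
    (hw : w = fun x y u => p u y * Real.exp (-‖x - t • u‖ ^ 2 / (2 * (1 - t ^ 2))))
    (Z : EuclideanSpace ℝ (Fin d) → EuclideanSpace ℝ (Fin dy) → ℝ)
    (hZ : Z = fun x y => ∫ u, w x y u)
    (vF : EuclideanSpace ℝ (Fin d) → EuclideanSpace ℝ (Fin dy) →
      EuclideanSpace ℝ (Fin d))
    (hvF : vF = fun x y =>
      (1 / t) • gradient
          (fun x' => Real.log ((2 * Real.pi * (1 - t ^ 2)) ^ (-(d : ℝ) / 2) * Z x' y)) x
        + (1 / t) • x) :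
    ∀ (x : EuclideanSpace ℝ (Fin d)) (y : EuclideanSpace ℝ (Fin dy))
      (u v : EuclideanSpace ℝ (Fin d)),
      ⟪(fderiv ℝ (fun x' => vF x' y) x) u, v⟫
        = (-(t / (1 - t ^ 2))) * ⟪u, v⟫
          + (t / (1 - t ^ 2) ^ 2) *
            ((∫ a, (w x y a / Z x y) * (⟪u, a⟫ * ⟪v, a⟫))
              - (∫ a, (w x y a / Z x y) * ⟪u, a⟫) * ∫ a, (w x y a / Z x y) * ⟪v, a⟫) :=
  stmt6_general t ht p hp0 hpsupp hpint w hw Z hZ vF hvF
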